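/- Let m ∈ M with support H = {j₁<⋯<j_s}, and for l ≥ 1 set i_n = min(l, j_n) for 1 ≤ n ≤ s, i₀ = 0, with p_{i} the vacancy numbers (p₀ = L). Then det F[j_{n+1}] - det F[j_n] = (p_{i_s}(i_{n+1} - i_n)/(p_{i_{n+1}}·p_{i_n})) · det F for 0 ≤ n ≤ s-1 (with det F[j₀] := 0), where F[k] is F with its k-th column replaced by h' = (min(j,l))_{j∈H}. -/

import Mathlib

/-!
By Cramer's rule, `det F[j_n] = det F · x_n` where `F x = h'`, so it suffices to check that
`x_n = p_{i_s} · Σ_{t ≤ n} (i_{t+1} - i_t) / (p_{i_{t+1}} p_{i_t})` solves `F x = h'`.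
As a function of `y`, the vacancy number `p(y) = L - 2 Σ_b min(y, j_b) m_b` is affine between
consecutive `j`'s, with slope `-2 M_t`, `M_t = Σ_{b ≥ t} m_b`; hence
`2 M_t (i_{t+1} - i_t) / (p_{i_{t+1}} p_{i_t}) = 1/p_{i_{t+1}} - 1/p_{i_t}`.
With this telescoping sum, the difference of two consecutive rows of `F x` is `i_{a+1} - i_a`,
and the rows sum up to `i_{a+1} = min(l, j_a)`.
-/

open Finset Matrix

lemma Matrix.det_updateCol_of_mulVec_eq {n R : Type*} [Fintype n] [DecidableEq n] [CommRing R]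
    {A : Matrix n n R} {x b : n → R} (h : A *ᵥ x = b) (k : n) :
    (A.updateCol k b).det = A.det * x k := by
  rw [← cramer_apply, ← h, cramer_eq_adjugate_mulVec, mulVec_mulVec, adjugate_mul, smul_mulVec,
    one_mulVec, Pi.smul_apply, smul_eq_mul]

namespace VacancyMatrix

variable {K : Type*} [Field K] {s : ℕ}

/-- The paper's `j_n` for `0 ≤ n ≤ s`, with `j_0 = 0`: `point j (b + 1) = j b`. -/
def point (j : Fin s → K) (n : ℕ) : K := if h : 0 < n ∧ n ≤ s then j ⟨n - 1, by omega⟩ else 0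

@[simp] lemma point_zero (j : Fin s → K) : point j 0 = 0 := by simp [point]

lemma point_succ (j : Fin s → K) (b : Fin s) : point j (b + 1) = j b := by
  simp [point, b.isLt]

def tailMass (m : Fin s → K) (n : ℕ) : K := ∑ b ∈ univ.filter (fun b : Fin s => n ≤ (b : ℕ)), m b

lemma sum_mul_sum_Ico_eq (m : Fin s → K) (c : ℕ → K) (a : ℕ) :
    ∑ b ∈ univ.filter (fun b : Fin s => a ≤ (b : ℕ)), m b * ∑ t ∈ Ico a (b + 1), c t
      = ∑ t ∈ Ico a s, c t * tailMass m t := by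
  simp only [mul_sum, tailMass]
  rw [sum_comm' (t' := Ico a s) (s' := fun t => univ.filter (fun b : Fin s => t ≤ (b : ℕ)))]
  · exact sum_congr rfl fun _ _ => sum_congr rfl fun _ _ => mul_comm _ _
  · intro b t
    simp only [mem_filter, mem_univ, true_and, mem_Ico]
    have := b.isLt
    omega

variable [LinearOrder K] (L l : K) (j m : Fin s → K)

def vacancy (y : K) : K := L - 2 * ∑ b, min y (j b) * m b

def cap (n : ℕ) : K := min l (point j n)

def coeff (t : ℕ) : K :=
  (cap l j (t + 1) - cap l j t) / (vacancy L j m (cap l j (t + 1)) * vacancy L j m (cap l j t))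

def partialCoeff (n : ℕ) : K := ∑ t ∈ range n, coeff L l j m t

def solution (b : Fin s) : K := vacancy L j m (cap l j s) * partialCoeff L l j m (b + 1)

def vacancyMatrix : Matrix (Fin s) (Fin s) K :=
  of fun a b => (if a = b then vacancy L j m (j a) else 0) + 2 * min (j a) (j b) * m b

/-- Row `a` of `vacancyMatrix *ᵥ solution` is `rowValue (j a) (partialCoeff (a + 1))`; letting the
point run through `point j n` makes consecutive rows telescope, starting from `0` at `n = 0`. -/
def rowValue (y σ : K) : K :=
  vacancy L j m y * (vacancy L j m (cap l j s) * σ)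
    + 2 * ∑ b, min y (j b) * (m b * solution L l j m b)

variable {L l j m}

lemma le_point (hj : Monotone j) {b : Fin s} {n : ℕ} (hb : (b : ℕ) < n) (hn : n ≤ s) :
    j b ≤ point j n := by
  obtain ⟨k, rfl⟩ : ∃ k, n = k + 1 := ⟨n - 1, by omega⟩
  rw [show k = ((⟨k, by omega⟩ : Fin s) : ℕ) from rfl, point_succ]
  exact hj (Fin.mk_le_mk.mpr (by omega))

lemma point_le (hj : Monotone j) (hj0 : ∀ b, 0 ≤ j b) {b : Fin s} {n : ℕ} (hb : n ≤ b + 1) :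
    point j n ≤ j b := by
  rcases n with _ | k
  · simpa using hj0 b
  · rw [show k = ((⟨k, by omega⟩ : Fin s) : ℕ) from rfl, point_succ]
    exact hj (Fin.mk_le_mk.mpr (by omega))

lemma min_cap_of_lt (hj : Monotone j) {b : Fin s} {n : ℕ} (hb : (b : ℕ) < n) (hn : n ≤ s) :
    min (cap l j n) (j b) = min l (j b) := by
  rw [cap, min_assoc, min_eq_right (le_point hj hb hn)]

lemma cap_le (hj : Monotone j) (hj0 : ∀ b, 0 ≤ j b) {b : Fin s} {n : ℕ} (hb : n ≤ b + 1) :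
    cap l j n ≤ j b :=
  (min_le_right _ _).trans (point_le hj hj0 hb)

lemma sum_min_mul_sub_sum_min_mul (f : Fin s → K) {n : ℕ} {y y' : K}
    (hlow : ∀ b : Fin s, (b : ℕ) < n → min y' (j b) = min y (j b))
    (hy : ∀ b : Fin s, n ≤ (b : ℕ) → y ≤ j b) (hy' : ∀ b : Fin s, n ≤ (b : ℕ) → y' ≤ j b) :
    ∑ b, min y' (j b) * f b - ∑ b, min y (j b) * f b
      = (y' - y) * ∑ b ∈ univ.filter (fun b : Fin s => n ≤ (b : ℕ)), f b := by
  rw [← sum_sub_distrib, sum_filter, mul_sum]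
  refine sum_congr rfl fun b _ => ?_
  split_ifs with hb
  · rw [min_eq_left (hy' b hb), min_eq_left (hy b hb)]; ring
  · rw [hlow b (by omega)]; ring

lemma vacancy_sub_vacancy {n : ℕ} {y y' : K}
    (hlow : ∀ b : Fin s, (b : ℕ) < n → min y' (j b) = min y (j b))
    (hy : ∀ b : Fin s, n ≤ (b : ℕ) → y ≤ j b) (hy' : ∀ b : Fin s, n ≤ (b : ℕ) → y' ≤ j b) :
    vacancy L j m y' - vacancy L j m y = -2 * (y' - y) * tailMass m n := by
  have h := sum_min_mul_sub_sum_min_mul m hlow hy hy'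
  rw [vacancy, vacancy, tailMass]
  linear_combination -2 * h

lemma vacancy_cap_succ_sub (hj : Monotone j) (hj0 : ∀ b, 0 ≤ j b) {t : ℕ} (ht : t < s) :
    vacancy L j m (cap l j (t + 1)) - vacancy L j m (cap l j t)
      = -2 * (cap l j (t + 1) - cap l j t) * tailMass m t :=
  vacancy_sub_vacancy
    (fun _ hb => by rw [min_cap_of_lt hj (by omega) ht, min_cap_of_lt hj hb ht.le])
    (fun _ hb => cap_le hj hj0 (by omega)) (fun _ hb => cap_le hj hj0 (by omega))

lemma two_mul_coeff_mul_tailMass (hj : Monotone j) (hj0 : ∀ b, 0 ≤ j b)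
    (hvac : ∀ n ≤ s, vacancy L j m (cap l j n) ≠ 0) {t : ℕ} (ht : t < s) :
    2 * coeff L l j m t * tailMass m t
      = 1 / vacancy L j m (cap l j (t + 1)) - 1 / vacancy L j m (cap l j t) := by
  have h := vacancy_cap_succ_sub (L := L) (l := l) (m := m) hj hj0 ht
  have h1 := hvac (t + 1) ht
  have h0 := hvac t ht.le
  rw [coeff]
  field_simp
  linear_combination h

lemma two_mul_sum_coeff_mul_tailMass (hj : Monotone j) (hj0 : ∀ b, 0 ≤ j b)
    (hvac : ∀ n ≤ s, vacancy L j m (cap l j n) ≠ 0) {a : ℕ} (ha : a ≤ s) :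
    2 * ∑ t ∈ Ico a s, coeff L l j m t * tailMass m t
      = 1 / vacancy L j m (cap l j s) - 1 / vacancy L j m (cap l j a) := by
  rw [mul_sum, ← sum_Ico_sub (fun t => 1 / vacancy L j m (cap l j t)) ha]
  exact sum_congr rfl fun t ht => by
    rw [← mul_assoc, two_mul_coeff_mul_tailMass hj hj0 hvac (mem_Ico.mp ht).2]

lemma sum_min_mul_sub_sum_min_point_mul (hj : Monotone j) (hj0 : ∀ b, 0 ≤ j b) (f : Fin s → K)
    {a : ℕ} (ha : a < s) {y : K} (hy : point j a ≤ y) (hy' : y ≤ point j (a + 1)) :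
    ∑ b, min y (j b) * f b - ∑ b, min (point j a) (j b) * f b
      = (y - point j a) * ∑ b ∈ univ.filter (fun b : Fin s => a ≤ (b : ℕ)), f b :=
  sum_min_mul_sub_sum_min_mul f
    (fun _ hb => by
      rw [min_eq_right (le_point hj hb ha.le), min_eq_right ((le_point hj hb ha.le).trans hy)])
    (fun _ hb => point_le hj hj0 (by omega))
    (fun _ hb => hy'.trans (point_le hj hj0 (by omega)))

lemma vacancy_sub_vacancy_point (hj : Monotone j) (hj0 : ∀ b, 0 ≤ j b)
    {a : ℕ} (ha : a < s) {y : K} (hy : point j a ≤ y) (hy' : y ≤ point j (a + 1)) :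
    vacancy L j m y - vacancy L j m (point j a) = -2 * (y - point j a) * tailMass m a := by
  have h := sum_min_mul_sub_sum_min_point_mul hj hj0 m ha hy hy'
  rw [vacancy, vacancy, tailMass]
  linear_combination -2 * h

lemma point_le_point_succ (hj : Monotone j) (hj0 : ∀ b, 0 ≤ j b) {a : ℕ} (ha : a < s) :
    point j a ≤ point j (a + 1) := by
  rw [show a = ((⟨a, ha⟩ : Fin s) : ℕ) from rfl, point_succ]
  exact point_le hj hj0 (by simp)

lemma cap_eq_of_le_point (hj : Monotone j) {a : ℕ} (ha : a < s) (hl : l ≤ point j (a + 1)) :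
    cap l j s = l := by
  refine min_eq_left (hl.trans ?_)
  rw [show a = ((⟨a, ha⟩ : Fin s) : ℕ) from rfl, point_succ]
  exact le_point hj ha le_rfl

lemma cap_succ_sub_cap (hj : Monotone j) (hj0 : ∀ b, 0 ≤ j b)
    (hvac : ∀ n ≤ s, vacancy L j m (cap l j n) ≠ 0) {a : ℕ} (ha : a < s) :
    cap l j (a + 1) - cap l j a
      = vacancy L j m (point j (a + 1)) * vacancy L j m (cap l j s) * coeff L l j m a
        + (point j (a + 1) - point j a)
          * (1 - vacancy L j m (cap l j s) / vacancy L j m (cap l j a)) := by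
  have hpa := point_le_point_succ hj hj0 ha
  have h0 := hvac a ha.le
  have h1 := hvac (a + 1) ha
  rcases le_or_gt l (point j a) with hla | hla
  · have hca : cap l j a = l := min_eq_left hla
    have hca1 : cap l j (a + 1) = l := min_eq_left (hla.trans hpa)
    have hcs : cap l j s = l := cap_eq_of_le_point hj ha (hla.trans hpa)
    rw [hca] at h0
    simp [coeff, hca, hca1, hcs, div_self h0]
  · have hca : cap l j a = point j a := min_eq_right hla.le
    have hca1 : point j a ≤ cap l j (a + 1) := le_min hla.le hpa
    have hvac_point := vacancy_sub_vacancy_point (L := L) (m := m) hj hj0 ha hpa le_rfl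
    have hvac_cap := vacancy_sub_vacancy_point (L := L) (m := m) hj hj0 ha hca1 (min_le_right _ _)
    -- either the cap is inactive at `a + 1`, or it is active from `a + 1` on
    have hjump : (vacancy L j m (cap l j s) - vacancy L j m (cap l j (a + 1)))
        * (cap l j (a + 1) - point j (a + 1)) = 0 := by
      rcases le_total l (point j (a + 1)) with hl' | hl'
      · rw [cap_eq_of_le_point hj ha hl', show cap l j (a + 1) = l from min_eq_left hl', sub_self,
          zero_mul]
      · rw [show cap l j (a + 1) = point j (a + 1) from min_eq_right hl', sub_self, mul_zero]
    rw [hca] at h0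
    rw [coeff, hca]
    field_simp
    linear_combination (point j (a + 1) - point j a) * vacancy L j m (cap l j s) * hvac_cap
      - (cap l j (a + 1) - point j a) * vacancy L j m (cap l j s) * hvac_point
      - vacancy L j m (point j a) * hjump

lemma sum_filter_mul_solution {a : ℕ} :
    ∑ b ∈ univ.filter (fun b : Fin s => a ≤ (b : ℕ)), m b * solution L l j m b
      = vacancy L j m (cap l j s) * (partialCoeff L l j m a * tailMass m a
          + ∑ t ∈ Ico a s, coeff L l j m t * tailMass m t) := by
  have h : ∀ b ∈ univ.filter (fun b : Fin s => a ≤ (b : ℕ)), m b * solution L l j m b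
      = vacancy L j m (cap l j s) * (partialCoeff L l j m a * m b
          + m b * ∑ t ∈ Ico a (b + 1), coeff L l j m t) := by
    intro b hb
    have hab : a ≤ b + 1 := by simp only [mem_filter] at hb; omega
    rw [solution, partialCoeff, partialCoeff, ← sum_range_add_sum_Ico _ hab]
    ring
  rw [sum_congr rfl h, ← mul_sum, sum_add_distrib, ← mul_sum, sum_mul_sum_Ico_eq, tailMass]

lemma rowValue_point_succ_sub (hj : Monotone j) (hj0 : ∀ b, 0 ≤ j b)
    (hvac : ∀ n ≤ s, vacancy L j m (cap l j n) ≠ 0) {a : ℕ} (ha : a < s) :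
    rowValue L l j m (point j (a + 1)) (partialCoeff L l j m (a + 1))
      - rowValue L l j m (point j a) (partialCoeff L l j m a) = cap l j (a + 1) - cap l j a := by
  have hpa := point_le_point_succ hj hj0 ha
  have hsum := sum_min_mul_sub_sum_min_point_mul hj hj0 (fun b => m b * solution L l j m b) ha
    hpa le_rfl
  have hvdiff := vacancy_sub_vacancy_point (L := L) (m := m) hj hj0 ha hpa le_rfl
  have htel := two_mul_sum_coeff_mul_tailMass hj hj0 hvac ha.le
  have hP : vacancy L j m (cap l j s) * (1 / vacancy L j m (cap l j s)) = 1 :=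
    mul_one_div_cancel (hvac s le_rfl)
  rw [sum_filter_mul_solution] at hsum
  rw [cap_succ_sub_cap hj hj0 hvac ha, rowValue, rowValue, partialCoeff, sum_range_succ,
    ← partialCoeff]
  linear_combination vacancy L j m (cap l j s) * partialCoeff L l j m a * hvdiff + 2 * hsum
    + (point j (a + 1) - point j a) * vacancy L j m (cap l j s) * htel
    + (point j (a + 1) - point j a) * hP

lemma rowValue_point (hj : Monotone j) (hj0 : ∀ b, 0 ≤ j b) (hl : 0 ≤ l)
    (hvac : ∀ n ≤ s, vacancy L j m (cap l j n) ≠ 0) {n : ℕ} (hn : n ≤ s) :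
    rowValue L l j m (point j n) (partialCoeff L l j m n) = cap l j n := by
  induction n with
  | zero => simp [rowValue, partialCoeff, cap, hl, hj0]
  | succ a ih =>
    have h := rowValue_point_succ_sub hj hj0 hvac hn
    rw [ih (by omega)] at h
    linear_combination h

lemma vacancyMatrix_mulVec_solution (hj : Monotone j) (hj0 : ∀ b, 0 ≤ j b) (hl : 0 ≤ l)
    (hvac : ∀ n ≤ s, vacancy L j m (cap l j n) ≠ 0) :
    vacancyMatrix L j m *ᵥ solution L l j m = fun a => min l (j a) := by
  funext a
  have h := rowValue_point hj hj0 hl hvac (Nat.succ_le_of_lt a.isLt)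
  rw [cap, rowValue, point_succ] at h
  rw [← h, mulVec, dotProduct]
  simp only [vacancyMatrix, of_apply, add_mul, sum_add_distrib, ite_mul, zero_mul, sum_ite_eq,
    mem_univ, if_true, mul_sum]
  congr 1
  exact sum_congr rfl fun _ _ => by ring

end VacancyMatrix

open VacancyMatrix

theorem stmt18_general (L : ℕ) (s : ℕ)
    (j : Fin s → ℕ) (hj : StrictMono j)
    (m : Fin s → ℕ)
    (l : ℕ)
    (p : ℕ → ℤ)
    (hp : ∀ x, p x = (L : ℤ) - 2 * ∑ b, (min x (j b) : ℤ) * (m b : ℤ))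
    (F : Matrix (Fin s) (Fin s) ℤ)
    (hF : ∀ a b, F a b =
      (if a = b then p (j a) else 0) + 2 * (min (j a) (j b) : ℤ) * (m b : ℤ))
    (i : ℕ → ℕ) (hi0 : i 0 = 0)
    (hi : ∀ n (hn : n < s), i (n + 1) = min l (j ⟨n, hn⟩))
    (hpne : ∀ n ≤ s, p (i n) ≠ 0)
    (Fd : ℕ → ℤ) (hFd0 : Fd 0 = 0)
    (hFd : ∀ n (hn : n < s),
      Fd (n + 1) = (F.updateCol ⟨n, hn⟩ (fun a => (min (j a) l : ℤ))).det) :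
    ∀ n < s, ((Fd (n + 1) : ℚ) - (Fd n : ℚ)) =
      ((p (i s) : ℚ) * ((i (n + 1) : ℚ) - (i n : ℚ))) /
          ((p (i (n + 1)) : ℚ) * (p (i n) : ℚ)) * (F.det : ℚ) := by
  set jq : Fin s → ℚ := fun b => (j b : ℚ)
  set mq : Fin s → ℚ := fun b => (m b : ℚ)
  have hjq : Monotone jq := fun a b hab => by simpa [jq] using hj.monotone hab
  have hjq0 : ∀ b, 0 ≤ jq b := fun b => Nat.cast_nonneg _
  have hl : (0 : ℚ) ≤ l := Nat.cast_nonneg _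
  have hp' : ∀ x : ℕ, (p x : ℚ) = vacancy (L : ℚ) jq mq x := fun x => by
    simp [hp x, vacancy, jq, mq]
  have hi' : ∀ n ≤ s, (i n : ℚ) = cap (l : ℚ) jq n := by
    rintro (_ | n) hn
    · simp [hi0, cap, hl]
    · simp [hi n hn, cap, jq, point_succ jq ⟨n, hn⟩]
  have hpi : ∀ n ≤ s, (p (i n) : ℚ) = vacancy (L : ℚ) jq mq (cap (l : ℚ) jq n) :=
    fun n hn => by rw [hp', hi' n hn]
  have hvac : ∀ n ≤ s, vacancy (L : ℚ) jq mq (cap (l : ℚ) jq n) ≠ 0 :=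
    fun n hn => by rw [← hpi n hn]; exact_mod_cast hpne n hn
  have hFq : F.map (Int.cast : ℤ → ℚ) = vacancyMatrix (L : ℚ) jq mq := by
    ext a b
    simp [hF, vacancyMatrix, hp', jq, mq]
  have hFd' : ∀ n ≤ s, (Fd n : ℚ) = F.det * (vacancy (L : ℚ) jq mq (cap (l : ℚ) jq s)
      * partialCoeff (L : ℚ) l jq mq n) := by
    rintro (_ | n) hn
    · simp [hFd0, partialCoeff]
    · have hcol : (Int.cast ∘ fun a => (min (j a) l : ℤ)) = fun a => min (l : ℚ) (jq a) := by
        simp [Function.comp_def, jq, min_comm]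
      rw [hFd n hn, Int.cast_det, map_updateCol, hcol, hFq,
        det_updateCol_of_mulVec_eq (vacancyMatrix_mulVec_solution hjq hjq0 hl hvac), ← hFq,
        ← Int.cast_det, solution]
  intro n hn
  rw [hFd' (n + 1) hn, hFd' n hn.le, hi' (n + 1) hn, hi' n hn.le, hpi s le_rfl, hpi (n + 1) hn,
    hpi n hn.le, partialCoeff, sum_range_succ, coeff, ← partialCoeff]
  ring

/-- `det F[j_{n+1}] - det F[j_n] = (p_{i_s}(i_{n+1}-i_n)/(p_{i_{n+1}} p_{i_n})) det F`
for `0 ≤ n ≤ s-1`, with `det F[j₀] := 0`, `i₀ = 0`, `i_n = min(l, j_n)`, and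
`F[k]` obtained from `F` by replacing the `k`-th column by
`h' = (min(j,l))_{j∈H}`. -/
theorem stmt18 (L : ℕ) (hL : 0 < L) (s : ℕ) (hs : 0 < s)
    (j : Fin s → ℕ) (hj : StrictMono j) (hjpos : ∀ a, 0 < j a)
    (m : Fin s → ℕ) (hm : ∀ a, 0 < m a)
    (l : ℕ) (hl : 1 ≤ l)
    (p : ℕ → ℤ)
    (hp : ∀ x, p x = (L : ℤ) - 2 * ∑ b, (min x (j b) : ℤ) * (m b : ℤ))
    (F : Matrix (Fin s) (Fin s) ℤ)
    (hF : ∀ a b, F a b =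
      (if a = b then p (j a) else 0) + 2 * (min (j a) (j b) : ℤ) * (m b : ℤ))
    (i : ℕ → ℕ) (hi0 : i 0 = 0)
    (hi : ∀ n (hn : n < s), i (n + 1) = min l (j ⟨n, hn⟩))
    (hpne : ∀ n ≤ s, p (i n) ≠ 0)
    (Fd : ℕ → ℤ) (hFd0 : Fd 0 = 0)
    (hFd : ∀ n (hn : n < s),
      Fd (n + 1) = (F.updateCol ⟨n, hn⟩ (fun a => (min (j a) l : ℤ))).det) :
    ∀ n < s, ((Fd (n + 1) : ℚ) - (Fd n : ℚ)) =
      ((p (i s) : ℚ) * ((i (n + 1) : ℚ) - (i n : ℚ))) /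
          ((p (i (n + 1)) : ℚ) * (p (i n) : ℚ)) * (F.det : ℚ) :=
  stmt18_general L s j hj m l p hp F hF i hi0 hi hpne Fd hFd0 hFd
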